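/- arXiv:2107.11867 — 2 statements merged into one kernel-verified Lean document; each statement's English description precedes it below -/
import Mathlib

section
/- If $\mathcal{M} \models \mathsf{PA}$ has a bounded CP-generic subset, then all sufficiently large elements $b \in M$ generate $\mathcal{M}$, i.e., $\mathrm{Scl}(b) = M$. -/
open FirstOrder Language Set

open FirstOrder Language Set

/-- The first-order language of arithmetic: constants 0, 1; binary functions + , * ;
binary relation < . -/
abbrev Larith : FirstOrder.Language :=
  ⟨fun n => match n with
    | 0 => Fin 2
    | 2 => Fin 2
    | _ => Empty,
   fun n => match n with
    | 2 => Unit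
    | _ => Empty⟩

/-- The data of an interpretation of the language of arithmetic. -/
class ArithData (M : Type*) extends Zero M, One M, Add M, Mul M, LT M

instance arithStructure (M : Type*) [ArithData M] : Larith.Structure M where
  funMap {n} f x :=
    match n, f with
    | 0, c => if (show Fin 2 from c) = 0 then (0 : M) else 1
    | 2, f => if (show Fin 2 from f) = 0 then x 0 + x 1 else x 0 * x 1
  RelMap {n} r x :=
    match n, r with
    | 2, _ => x 0 < x 1

/-- The canonical embedding of the standard natural numbers. Its range is the standard cut ω. -/
def std (M : Type*) [ArithData M] : ℕ → M
  | 0 => 0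
  | n + 1 => std M n + 1

/-- A semantic rendering of "`M ⊨ PA`": the basic axioms of a discretely ordered commutative
semiring together with the induction scheme for all parametrically definable sets. -/
def IsPAModel (M : Type*) [ArithData M] : Prop :=
  (∀ x y z : M, x + (y + z) = (x + y) + z) ∧
  (∀ x y : M, x + y = y + x) ∧
  (∀ x : M, x + 0 = x) ∧
  (∀ x y z : M, x * (y * z) = (x * y) * z) ∧
  (∀ x y : M, x * y = y * x) ∧
  (∀ x : M, x * 1 = x) ∧
  (∀ x : M, x * 0 = 0) ∧
  (∀ x y z : M, x * (y + z) = x * y + x * z) ∧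
  (∀ x y z : M, x < y → y < z → x < z) ∧
  (∀ x : M, ¬ x < x) ∧
  (∀ x y : M, x < y ∨ x = y ∨ y < x) ∧
  (∀ x y z : M, x < y → x + z < y + z) ∧
  (∀ x y z : M, x + z = y + z → x = y) ∧
  ((0 : M) < 1) ∧
  (∀ x : M, x = 0 ∨ 0 < x) ∧
  (∀ x y : M, x < y → (x + 1 = y ∨ x + 1 < y)) ∧
  (∀ x y : M, x < y → ∃ z : M, x + z = y) ∧
  (∀ S : Set (Fin 1 → M), Set.Definable (Set.univ : Set M) Larith S →
    (fun _ => (0 : M)) ∈ S →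
    (∀ x : M, (fun _ => x) ∈ S → (fun _ => x + 1) ∈ S) →
    ∀ x : M, (fun _ => x) ∈ S)

/-- The Skolem closure (= definable closure) of a set of parameters in a model of PA:
the set of elements definable (as singletons) from parameters in `A`. -/
def Scl (M : Type*) [ArithData M] (A : Set M) : Set M :=
  { x | Set.Definable A Larith ({ f | f 0 = x } : Set (Fin 1 → M)) }

/-- `X` is CP-generic (Chatzidakis–Pillay generic): for every set `D ⊆ Mⁿ` definable using only
the parameter `a` and every `I ⊆ {1,…,n}`, if `D` contains a tuple of pairwise distinct elements
all lying outside `Scl(a)`, then `D` contains a tuple whose entries lie in `X` exactly at the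
positions in `I`. -/
def CPGeneric (M : Type*) [ArithData M] (X : Set M) : Prop :=
  ∀ (n : ℕ) (a : M) (D : Set (Fin n → M)), Set.Definable ({a} : Set M) Larith D →
    ∀ I : Set (Fin n),
      (∃ b : Fin n → M, b ∈ D ∧ Function.Injective b ∧ ∀ i, b i ∉ Scl M {a}) →
      ∃ b : Fin n → M, b ∈ D ∧ ∀ i, (b i ∈ X ↔ i ∈ I)

/-- `X` is strongly CP-generic: for every definable `D ⊆ Mⁿ` (any parameters) containing an
infinite family of injective tuples with pairwise disjoint coordinate sets, and every
`I ⊆ {1,…,n}`, `D` contains a tuple whose entries lie in `X` exactly at positions in `I`. -/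
def StrongCPGeneric (M : Type*) [ArithData M] (X : Set M) : Prop :=
  ∀ (n : ℕ) (D : Set (Fin n → M)), Set.Definable (Set.univ : Set M) Larith D →
    ∀ I : Set (Fin n),
      (∃ B : Set (Fin n → M), B ⊆ D ∧ B.Infinite ∧ (∀ b ∈ B, Function.Injective b) ∧
        (∀ b ∈ B, ∀ c ∈ B, b ≠ c → ∀ i j, b i ≠ c j)) →
      ∃ b : Fin n → M, b ∈ D ∧ ∀ i, (b i ∈ X ↔ i ∈ I)

/-! ### Auxiliary constructions -/

/-- The constant term naming `d` in `Larith[[{d}]]`. -/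
noncomputable def dTerm {M : Type*} [ArithData M] (d : M) (α : Type) :
    (Larith[[({d} : Set M)]]).Term α :=
  (Larith.con (⟨d, rfl⟩ : ({d} : Set M))).term

/-- The term `(v₀ + d) + 1` over the parameter `d`. -/
noncomputable def shiftTerm {M : Type*} [ArithData M] (d : M) :
    (Larith[[({d} : Set M)]]).Term (Fin 1) :=
  Functions.apply₂ (Sum.inl (0 : Fin 2))
    (Functions.apply₂ (Sum.inl (0 : Fin 2)) (Term.var 0) (dTerm d (Fin 1)))
    (Constants.term (Sum.inl ((1 : Fin 2) : Larith.Constants)))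

lemma shiftTerm_realize {M : Type*} [ArithData M] (d : M) (f : Fin 1 → M) :
    (shiftTerm d).realize f = (f 0 + d) + 1 := by
  have hc : (dTerm d (Fin 1)).realize f = d := Term.realize_con
  simp [shiftTerm, hc]
  rfl

/-- If `(x + d) + 1` is in `Scl {d}` then so is `x`. -/
lemma scl_unshift {M : Type*} [ArithData M] (hPA : IsPAModel M) (d x : M)
    (h : (x + d) + 1 ∈ Scl M {d}) : x ∈ Scl M {d} := by
  obtain ⟨φ, hφ⟩ := h
  obtain ⟨-, -, -, -, -, -, -, -, -, -, -, -, hcancel, -⟩ := hPA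
  refine ⟨φ.subst (fun _ => shiftTerm d), ?_⟩
  ext f
  simp only [Set.mem_setOf_eq]
  have h1 : Formula.Realize (φ.subst fun _ => shiftTerm d) f ↔
      φ.Realize (fun _ => (shiftTerm d).realize f) :=
    BoundedFormula.realize_subst
  have h2 : φ.Realize (fun _ : Fin 1 => (f 0 + d) + 1) ↔ ((f 0 + d) + 1 = (x + d) + 1) := by
    have := Set.ext_iff.mp hφ (fun _ : Fin 1 => (f 0 + d) + 1)
    simpa using this.symm
  rw [h1, shiftTerm_realize, h2]
  constructor
  · intro hfx; rw [hfx]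
  · intro he
    exact hcancel _ _ _ (hcancel _ _ _ he)

/-- The set `{f | d < f 0}` is definable over `{d}`. -/
lemma gt_definable {M : Type*} [ArithData M] (d : M) :
    Set.Definable ({d} : Set M) Larith ({f : Fin 1 → M | d < f 0}) := by
  refine ⟨Relations.formula₂ (Sum.inl (Unit.unit : Larith.Relations 2))
    (dTerm d (Fin 1)) (Term.var 0), ?_⟩
  ext f
  have hc : (dTerm d (Fin 1)).realize f = d := Term.realize_con
  simp only [Set.mem_setOf_eq, Formula.realize_rel₂, hc, Term.realize_var]
  rfl

/-- If a model of PA has a bounded CP-generic subset, then all sufficiently large elements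
generate the model. -/
theorem bounded_CP_implies_generation (M : Type*) [ArithData M] (hPA : IsPAModel M)
    (X : Set M) (hX : CPGeneric M X) (b : M) (hbd : ∀ x ∈ X, x < b) :
    ∃ c : M, ∀ d : M, c < d → Scl M {d} = Set.univ := by
  have hPA' := hPA
  obtain ⟨-, hcomm, hzero, -, -, -, -, -, htrans, hirr, -, hmono, -, h01, hzp, -, -, -⟩ := hPA'
  refine ⟨b, fun d hd => ?_⟩
  by_contra hne
  have hx : ∃ x : M, x ∉ Scl M {d} := by
    by_contra h
    push_neg at h
    exact hne (Set.eq_univ_of_forall h)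
  obtain ⟨x, hxn⟩ := hx
  set y : M := (x + d) + 1 with hy
  have hyn : y ∉ Scl M {d} := fun h => hxn (scl_unshift hPA d x h)
  -- d < d + 1
  have hdd1 : d < d + 1 := by
    have := hmono 0 1 d h01
    rw [hcomm 0 d, hzero, hcomm 1 d] at this
    exact this
  -- d < y
  have hdy : d < y := by
    rcases hzp x with hx0 | hx0
    · rw [hy, hx0, hcomm 0 d, hzero]
      exact hdd1
    · have h1 : 0 + d < x + d := hmono 0 x d hx0
      rw [hcomm 0 d, hzero] at h1
      have h2 : d + 1 < (x + d) + 1 := hmono d (x + d) 1 h1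
      exact htrans _ _ _ hdd1 h2
  -- apply CP-genericity
  obtain ⟨b', hb'D, hb'X⟩ := hX 1 d ({f : Fin 1 → M | d < f 0}) (gt_definable d)
    Set.univ ⟨fun _ => y, hdy, fun i j _ => Subsingleton.elim i j, fun _ => hyn⟩
  have hmem : b' 0 ∈ X := (hb'X 0).mpr (Set.mem_univ 0)
  have hlt : b' 0 < b := hbd _ hmem
  exact hirr b (htrans _ _ _ (htrans _ _ _ hd hb'D) hlt)
end

section
/- Let $\mathcal{M} \models \mathsf{PA}$ be nonstandard and let $X \subseteq M$ be strongly CP-generic with $2n \notin X$ for all $n \in \omega$. Then the standard cut $\omega$ is $0$-definable in $(\mathcal{M}, X)$ by the formula $\forall i < n \, (2i \notin X)$. -/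
open FirstOrder Language Set

open FirstOrder Language Set

section Aux

lemma nat_pow_facts {k l : ℕ} (hkl : k ≠ l) :
    4 ^ k ≠ 4 ^ l ∧ 4 ^ k ≠ 2 * 4 ^ l ∧ 2 * 4 ^ k ≠ 4 ^ l ∧ 2 * 4 ^ k ≠ 2 * 4 ^ l := by
  have main : ∀ a b : ℕ, a < b → 2 * 4 ^ a < 4 ^ b := by
    intro a b hab
    have h1 : 0 < (4 : ℕ) ^ a := pow_pos (by norm_num) a
    calc 2 * 4 ^ a < 4 ^ (a + 1) := by rw [pow_succ]; omega
    _ ≤ 4 ^ b := Nat.pow_le_pow_right (by norm_num) hab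
  have h1 : 0 < (4 : ℕ) ^ k := pow_pos (by norm_num) k
  have h2 : 0 < (4 : ℕ) ^ l := pow_pos (by norm_num) l
  rcases hkl.lt_or_gt with h | h
  · have := main k l h; omega
  · have := main l k h; omega

variable {M : Type*} [ArithData M]

lemma D_def (c : M) :
    Set.Definable (Set.univ : Set M) Larith
      {x : Fin 2 → M | x 0 < x 1 ∧ x 1 < c ∧ x 1 = (1 + 1) * x 0} := by
  classical
  let L' := Larith[[(Set.univ : Set M)]]
  let x0 : L'.Term (Fin 2) := Term.var 0
  let x1 : L'.Term (Fin 2) := Term.var 1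
  let one : L'.Term (Fin 2) := Term.func (Sum.inl (1 : Fin 2) : L'.Functions 0) ![]
  let cterm : L'.Term (Fin 2) := ((Larith.con (⟨c, Set.mem_univ c⟩ : (Set.univ : Set M))).term)
  let plus : L'.Functions 2 := Sum.inl (0 : Fin 2)
  let times : L'.Functions 2 := Sum.inl (1 : Fin 2)
  let lt : L'.Relations 2 := Sum.inl (() : Unit)
  let φ : L'.Formula (Fin 2) :=
    (lt.formula₂ x0 x1) ⊓ (lt.formula₂ x1 cterm) ⊓
      (Term.equal x1 (Term.func times ![Term.func plus ![one, one], x0]))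
  refine ⟨φ, ?_⟩
  ext x
  simp only [φ, Set.mem_setOf_eq, Formula.realize_inf, Formula.realize_rel₂,
    Formula.realize_equal, Term.realize_func, Term.realize_var, Term.realize_con,
    x0, x1, one, cterm, lt, plus, times]
  exact ⟨fun ⟨h1, h2, h3⟩ => ⟨⟨h1, h2⟩, h3⟩, fun ⟨⟨h1, h2⟩, h3⟩ => ⟨h1, h2, h3⟩⟩

variable (hPA : IsPAModel M)
include hPA

lemma pa_lt_succ (x : M) : x < x + 1 := by
  obtain ⟨ha, hc, hz, -, -, -, -, -, -, -, -, haddlt, -, h01, -⟩ := hPA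
  have := haddlt 0 1 x h01
  rwa [hc 0 x, hz x, hc 1 x] at this

lemma std_add (m n : ℕ) : std M (m + n) = std M m + std M n := by
  obtain ⟨ha, hc, hz, -⟩ := hPA
  induction n with
  | zero => simp [std, hz]
  | succ n ih =>
    show std M (m + n) + 1 = std M m + (std M n + 1)
    rw [ih, ha]

lemma std_lt {m n : ℕ} (h : m < n) : std M m < std M n := by
  have htrans := hPA.2.2.2.2.2.2.2.2.1
  induction n with
  | zero => omega
  | succ n ih =>
    have hs : std M n < std M (n + 1) := pa_lt_succ hPA (std M n)
    rcases Nat.lt_succ_iff_lt_or_eq.mp h with h' | h'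
    · exact htrans _ _ _ (ih h') hs
    · subst h'; exact hs

lemma std_inj : Function.Injective (std M) := by
  have hirr := hPA.2.2.2.2.2.2.2.2.2.1
  intro m n h
  by_contra hne
  rcases Nat.lt_or_lt_of_ne hne with h' | h'
  · exact absurd (h ▸ std_lt hPA h') (hirr _)
  · exact absurd (h ▸ std_lt hPA h') (hirr _)

lemma below_std (n : ℕ) (i : M) (h : i < std M n) : i ∈ Set.range (std M) := by
  obtain ⟨-, -, -, -, -, -, -, -, htrans, hirr, htri, -, -, -, hpos, hdisc, -⟩ := hPA
  induction n with
  | zero =>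
    rcases hpos i with h0 | h0
    · subst h0; exact absurd h (hirr 0)
    · exact absurd (htrans _ _ _ h0 h) (hirr 0)
  | succ n ih =>
    rcases htri i (std M n) with h' | h' | h'
    · exact ih h'
    · exact ⟨n, h'.symm⟩
    · have h2 : i < std M n + 1 := h
      rcases hdisc _ _ h' with h'' | h''
      · rw [h''] at h2; exact absurd h2 (hirr i)
      · exact absurd (htrans _ _ _ h2 h'') (hirr i)

lemma std_above {c : M} (hc : c ∉ Set.range (std M)) (n : ℕ) : std M n < c := by
  have htri := hPA.2.2.2.2.2.2.2.2.2.2.1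
  rcases htri c (std M n) with h' | h' | h'
  · exact absurd (below_std hPA n c h') hc
  · exact absurd ⟨n, h'.symm⟩ hc
  · exact h'

lemma two_mul_eq (a : M) : (1 + 1) * a = a + a := by
  obtain ⟨-, -, -, -, hmc, hm1, -, hdist, -⟩ := hPA
  rw [hmc, hdist, hm1]

end Aux

/-- In a nonstandard model of PA, if `X` is strongly CP-generic and `2n ∉ X` for every
standard `n`, then the standard cut is 0-definable in `(M, X)` by the formula
`∀ i < n, 2i ∉ X`. -/
theorem omega_definable_from_strongCP (M : Type*) [ArithData M] (hPA : IsPAModel M)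
    (hns : Set.range (std M) ≠ Set.univ) (X : Set M) (hX : StrongCPGeneric M X)
    (heven : ∀ a ∈ Set.range (std M), (1 + 1) * a ∉ X) :
    Set.range (std M) = { n : M | ∀ i : M, i < n → (1 + 1) * i ∉ X } := by
  have htrans := hPA.2.2.2.2.2.2.2.2.1
  ext n
  simp only [Set.mem_setOf_eq]
  constructor
  · rintro ⟨k, rfl⟩ i hik
    obtain ⟨m, rfl⟩ := below_std hPA k i hik
    exact heven _ ⟨m, rfl⟩
  · intro hn
    by_contra hns'
    have habove := std_above hPA hns'
    set D : Set (Fin 2 → M) := {x | x 0 < x 1 ∧ x 1 < n ∧ x 1 = (1 + 1) * x 0} with hD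
    have hBmem : ∀ k : ℕ, (![std M (4 ^ k), std M (2 * 4 ^ k)] : Fin 2 → M) ∈ D := by
      intro k
      refine ⟨?_, habove _, ?_⟩
      · exact std_lt hPA (by have : 0 < (4 : ℕ) ^ k := pow_pos (by norm_num) k; omega)
      · show std M (2 * 4 ^ k) = (1 + 1) * std M (4 ^ k)
        rw [two_mul_eq hPA, ← std_add hPA]
        congr 1
        ring
    have hBex : ∃ B : Set (Fin 2 → M), B ⊆ D ∧ B.Infinite ∧
        (∀ b ∈ B, Function.Injective b) ∧
        (∀ b ∈ B, ∀ c ∈ B, b ≠ c → ∀ i j, b i ≠ c j) := by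
      refine ⟨Set.range (fun k : ℕ => (![std M (4 ^ k), std M (2 * 4 ^ k)] : Fin 2 → M)),
        ?_, ?_, ?_, ?_⟩
      · rintro _ ⟨k, rfl⟩; exact hBmem k
      · apply Set.infinite_range_of_injective
        intro k l hkl
        have h0 := congrFun hkl 0
        simp only [Matrix.cons_val_zero] at h0
        exact Nat.pow_right_injective (by norm_num) (std_inj hPA h0)
      · rintro _ ⟨k, rfl⟩
        have hne : std M (4 ^ k) ≠ std M (2 * 4 ^ k) := by
          intro h
          have := std_inj hPA h
          have hp : 0 < (4 : ℕ) ^ k := pow_pos (by norm_num) k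
          omega
        intro i j hij
        fin_cases i <;> fin_cases j <;>
          simp only [Matrix.cons_val_zero, Matrix.cons_val_one, Matrix.head_cons] at hij ⊢ <;>
          first
            | rfl
            | exact absurd hij hne
            | exact absurd hij.symm hne
      · rintro _ ⟨k, rfl⟩ _ ⟨l, rfl⟩ hne i j
        have hkl : k ≠ l := by
          intro h; exact hne (by rw [h])
        obtain ⟨f1, f2, f3, f4⟩ := nat_pow_facts hkl
        have H : ∀ a b : ℕ, a ≠ b → std M a ≠ std M b := fun a b hab h => hab (std_inj hPA h)
        fin_cases i <;> fin_cases j <;>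
          simp only [Matrix.cons_val_zero, Matrix.cons_val_one, Matrix.head_cons] <;>
          [exact H _ _ f1; exact H _ _ f2; exact H _ _ f3; exact H _ _ f4]
    obtain ⟨b, hbD, hbX⟩ := hX 2 D (D_def n) {1} hBex
    obtain ⟨hb01, hb1c, hbeq⟩ := hbD
    have hb1X : b 1 ∈ X := (hbX 1).mpr rfl
    rw [hbeq] at hb1X
    exact hn (b 0) (htrans _ _ _ hb01 hb1c) hb1X
end
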